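/- Let G be a 2-edge-connected finite graph (multiple edges allowed, no loops) that is not a regular bipartite graph, let w be a vertex of G, and let λ ∈ {0,1}. Then G has a spanning weakly even (w,λ)-tree, i.e., a spanning tree T such that in the bipartition of T in which w lies in the part of type λ, every leaf of T whose degree in G equals the maximum degree Δ(G) lies in the type-0 part. -/

import Mathlib

/-!
Grow an independent set `A`, containing `w` exactly when `lam = true`, whose incident edges
connect `G`. Any spanning tree made of such edges is properly coloured by membership in `A`,
and its type-1 leaves lie in `A`; so it suffices that every vertex of the set `D` of
maximum-degree vertices of `A` has degree at least 2 in the tree. By Rado's theorem for the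
cycle matroid, a forest giving every vertex of `D` two edges exists once the edges at any
`D' ⊆ D` have rank at least `2|D'|`. In a component `K` of these edges, the `Δ |K ∩ D'|` edges
at `K ∩ D'` end in `K \ D'`, whose vertices have degree at most `Δ`; hence
`|K ∩ D'| < |K \ D'|`, since equality would make `G` regular and bipartite. Summing over the
components gives the rank bound; finally, extend the forest to a spanning tree.
-/

/-- A multigraph on vertex type `V` with edge type `E`: each edge is assigned an
unordered pair of distinct endpoints (multiple edges allowed, no loops). -/
structure Multigraph (V : Type) (E : Type) where
  inc : E → Sym2 V
  loopless : ∀ e : E, ¬ (inc e).IsDiag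

namespace Multigraph

variable {V E : Type}

/-- `u` and `v` are joined by an edge belonging to the edge set `S`. -/
def AdjOn (G : Multigraph V E) (S : Set E) (u v : V) : Prop :=
  ∃ e ∈ S, G.inc e = s(u, v)

/-- `v` is reachable from `u` using edges in `S`. -/
def ReachOn (G : Multigraph V E) (S : Set E) (u v : V) : Prop :=
  Relation.ReflTransGen (G.AdjOn S) u v

/-- `G` is connected. -/
def Connected (G : Multigraph V E) : Prop :=
  Nonempty V ∧ ∀ u v : V, G.ReachOn Set.univ u v

/-- The degree of `v` in the spanning subgraph with edge set `S`. -/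
noncomputable def degOn (G : Multigraph V E) (S : Set E) (v : V) : ℕ :=
  {e ∈ S | v ∈ G.inc e}.ncard

/-- The degree of `v` in `G`. -/
noncomputable def degree (G : Multigraph V E) (v : V) : ℕ :=
  G.degOn Set.univ v

/-- The maximum degree `Δ(G)`. -/
noncomputable def maxDegree (G : Multigraph V E) [Fintype V] : ℕ :=
  Finset.univ.sup G.degree

/-- `G` is regular. -/
def IsRegular (G : Multigraph V E) : Prop :=
  ∃ r : ℕ, ∀ v : V, G.degree v = r

/-- The 2-colouring `c` is proper on the edge set `S`: the two endpoints of any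
edge of `S` receive different colours. -/
def ProperOn (G : Multigraph V E) (S : Set E) (c : V → Bool) : Prop :=
  ∀ e ∈ S, ∀ u v : V, G.inc e = s(u, v) → c u ≠ c v

/-- `G` is bipartite. -/
def IsBipartite (G : Multigraph V E) : Prop :=
  ∃ c : V → Bool, G.ProperOn Set.univ c

/-- The sub-multigraph of `G` with vertex set `U` and edge set `S` is a tree:
`U` is nonempty, every edge of `S` joins vertices of `U`, any two vertices of `U`
are joined by a walk using edges of `S`, and there are exactly `|U| - 1` edges
(which forces acyclicity, and in particular forbids parallel edges in `S`). -/
structure IsTree (G : Multigraph V E) (U : Set V) (S : Set E) : Prop where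
  nonempty : U.Nonempty
  edges_in : ∀ e ∈ S, ∀ v : V, v ∈ G.inc e → v ∈ U
  conn : ∀ u ∈ U, ∀ v ∈ U, G.ReachOn S u v
  card_eq : S.ncard + 1 = U.ncard

/-- `v` is a leaf of the subgraph with edge set `S`. -/
def IsLeaf (G : Multigraph V E) (S : Set E) (v : V) : Prop :=
  G.degOn S v = 1

/-- `e` is a cutedge: after removing `e`, some pair of vertices is separated. -/
def IsCutedge (G : Multigraph V E) (e : E) : Prop :=
  ∃ u v : V, ¬ G.ReachOn {e}ᶜ u v

/-- `G` is 2-edge-connected: connected and without cutedges. -/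
def TwoEdgeConnected (G : Multigraph V E) : Prop :=
  G.Connected ∧ ∀ e : E, ¬ G.IsCutedge e

/-- The edge set `S` is a weak 2-factor of `G`: every vertex has degree at most
2 in `S` (equivalently, every component of the spanning subgraph is a path —
possibly a single vertex — or a cycle), and every vertex of degree less than 2
in `S` (i.e. every endvertex of a path component) has degree less than `Δ(G)`
in `G`. -/
def IsWeakTwoFactor (G : Multigraph V E) [Fintype V] (S : Set E) : Prop :=
  ∀ v : V, G.degOn S v ≤ 2 ∧ (G.degOn S v < 2 → G.degree v < G.maxDegree)

end Multigraph

namespace Multigraph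

variable {V E : Type} {G : Multigraph V E}

section Reachability

variable {S T : Set E} {e : E} {u v x y : V}

lemma exists_inc_eq (G : Multigraph V E) (e : E) : ∃ x y, x ≠ y ∧ G.inc e = s(x, y) := by
  obtain ⟨x, y, h⟩ : ∃ x y, G.inc e = s(x, y) := by
    induction G.inc e using Sym2.ind with
    | h x y => exact ⟨x, y, rfl⟩
  exact ⟨x, y, fun hxy => G.loopless e (by simp [h, hxy]), h⟩

lemma AdjOn.symm (h : G.AdjOn S u v) : G.AdjOn S v u := by
  obtain ⟨e, he, hinc⟩ := h
  exact ⟨e, he, hinc.trans Sym2.eq_swap⟩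

lemma AdjOn.mono (hST : S ⊆ T) (h : G.AdjOn S u v) : G.AdjOn T u v := by
  obtain ⟨e, he, hinc⟩ := h
  exact ⟨e, hST he, hinc⟩

lemma AdjOn.reachOn (h : G.AdjOn S u v) : G.ReachOn S u v := .single h

lemma ReachOn.rfl : G.ReachOn S u u := .refl

lemma ReachOn.trans {z : V} (h : G.ReachOn S u v) (h' : G.ReachOn S v z) : G.ReachOn S u z :=
  Relation.ReflTransGen.trans h h'

lemma ReachOn.symm (h : G.ReachOn S u v) : G.ReachOn S v u := by
  induction h with
  | refl => exact Relation.ReflTransGen.refl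
  | tail _ hbc ih => exact .head hbc.symm ih

lemma ReachOn.mono (hST : S ⊆ T) (h : G.ReachOn S u v) : G.ReachOn T u v :=
  Relation.ReflTransGen.mono (fun _ _ => AdjOn.mono hST) _ _ h

lemma reachOn_of_mem_inc (he : e ∈ S) (hu : u ∈ G.inc e) (hv : v ∈ G.inc e) :
    G.ReachOn S u v := by
  obtain rfl | huv := eq_or_ne u v
  · exact .rfl
  · exact AdjOn.reachOn ⟨e, he, ((Sym2.mem_and_mem_iff huv).1 ⟨hu, hv⟩)⟩

lemma ReachOn.eq_of_empty (h : G.ReachOn ∅ u v) : u = v := by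
  induction h with
  | refl => rfl
  | tail _ hbc => exact absurd hbc.choose_spec.1 (Set.notMem_empty _)

lemma ReachOn.exists_edge_crossing {U : Set V} (h : G.ReachOn S u v) (hu : u ∈ U) (hv : v ∉ U) :
    ∃ e ∈ S, ∃ a b, G.inc e = s(a, b) ∧ a ∈ U ∧ b ∉ U := by
  induction h with
  | refl => exact absurd hu hv
  | @tail b c _ hbc ih =>
    by_cases hb : b ∈ U
    · obtain ⟨e, he, hinc⟩ := hbc
      exact ⟨e, he, b, c, hinc, hb, hv⟩
    · exact ih hb

lemma reachOn_insert_iff (hxy : G.inc e = s(x, y)) :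
    G.ReachOn (insert e S) u v ↔ G.ReachOn S u v ∨
      (G.ReachOn S u x ∧ G.ReachOn S y v) ∨ (G.ReachOn S u y ∧ G.ReachOn S x v) := by
  refine ⟨fun h => ?_, fun h => ?_⟩
  · induction h with
    | refl => exact .inl .rfl
    | tail _ hbc ih =>
      obtain ⟨e', he', hinc⟩ := hbc
      rcases Set.mem_insert_iff.1 he' with rfl | heS
      · rcases Sym2.eq_iff.1 (hxy.symm.trans hinc) with ⟨rfl, rfl⟩ | ⟨rfl, rfl⟩ <;>
          rcases ih with h | ⟨h, -⟩ | ⟨h, -⟩ <;> simp [h, ReachOn.rfl]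
      · have hstep : G.ReachOn S _ _ := AdjOn.reachOn ⟨e', heS, hinc⟩
        rcases ih with h | ⟨h, h'⟩ | ⟨h, h'⟩
        · exact .inl (h.trans hstep)
        · exact .inr (.inl ⟨h, h'.trans hstep⟩)
        · exact .inr (.inr ⟨h, h'.trans hstep⟩)
  · have hxy' : G.ReachOn (insert e S) x y := AdjOn.reachOn ⟨e, Set.mem_insert e S, hxy⟩
    have hS : S ⊆ insert e S := Set.subset_insert e S
    rcases h with h | ⟨h, h'⟩ | ⟨h, h'⟩
    · exact h.mono hS
    · exact ((h.mono hS).trans hxy').trans (h'.mono hS)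
    · exact ((h.mono hS).trans hxy'.symm).trans (h'.mono hS)

end Reachability

section Rank

open Finset
open scoped Classical

variable [Fintype V] {S T : Set E} {e : E} {K : Finset V} {r u v x y : V}

noncomputable def comp (G : Multigraph V E) (S : Set E) (v : V) : Finset V := {u | G.ReachOn S v u}

noncomputable def comps (G : Multigraph V E) (S : Set E) : Finset (Finset V) :=
  univ.image (G.comp S)

/-- The rank function of the cycle matroid of `G`; the number of components never exceeds
`|V|`, so the subtraction does not truncate. -/
noncomputable def rank (G : Multigraph V E) (S : Set E) : ℕ := Fintype.card V - (G.comps S).card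

lemma mem_comp : u ∈ G.comp S v ↔ G.ReachOn S v u := by simp [comp]

lemma self_mem_comp : v ∈ G.comp S v := mem_comp.2 .rfl

lemma comp_eq_comp_iff : G.comp S u = G.comp S v ↔ G.ReachOn S u v := by
  refine ⟨fun h => mem_comp.1 (h ▸ self_mem_comp), fun h => ?_⟩
  ext z
  simp only [mem_comp]
  exact ⟨h.symm.trans, h.trans⟩

lemma comp_mem_comps : G.comp S v ∈ G.comps S := mem_image_of_mem _ (mem_univ v)

lemma eq_comp_of_mem_comps (hK : K ∈ G.comps S) (hv : v ∈ K) : K = G.comp S v := by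
  obtain ⟨u, -, rfl⟩ := mem_image.1 hK
  exact comp_eq_comp_iff.2 (mem_comp.1 hv)

lemma mem_comp_of_mem_inc (hv : v ∈ G.comp S r) (he : e ∈ S) (hve : v ∈ G.inc e)
    (hue : u ∈ G.inc e) : u ∈ G.comp S r :=
  mem_comp.2 ((mem_comp.1 hv).trans (reachOn_of_mem_inc he hve hue))

lemma card_comps_le : (G.comps S).card ≤ Fintype.card V := card_image_le

lemma sum_card_inter_comps (D : Finset V) : ∑ K ∈ G.comps S, (D ∩ K).card = D.card := by
  rw [sum_card_inter (n := 1) fun v _ => ?_, mul_one]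
  rw [card_eq_one]
  refine ⟨G.comp S v, eq_singleton_iff_unique_mem.2 ⟨?_, fun K hK => ?_⟩⟩
  · exact mem_filter.2 ⟨comp_mem_comps, self_mem_comp⟩
  · exact eq_comp_of_mem_comps (mem_filter.1 hK).1 (mem_filter.1 hK).2

lemma card_comps_eq_one [Nonempty V] (hS : ∀ u v, G.ReachOn S u v) : (G.comps S).card = 1 := by
  obtain ⟨v⟩ := ‹Nonempty V›
  refine card_eq_one.2 ⟨G.comp S v, eq_singleton_iff_unique_mem.2 ⟨comp_mem_comps, ?_⟩⟩
  intro K hK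
  obtain ⟨u, -, rfl⟩ := mem_image.1 hK
  exact comp_eq_comp_iff.2 (hS u v)

lemma rank_empty : G.rank ∅ = 0 := by
  have hcomp : G.comp ∅ = fun v => {v} := by
    ext v u
    simp only [mem_comp, mem_singleton]
    exact ⟨fun h => h.eq_of_empty.symm, fun h => h ▸ .rfl⟩
  rw [rank, comps, hcomp, card_image_of_injective _ singleton_injective, card_univ, Nat.sub_self]

lemma comp_insert (hxy : G.inc e = s(x, y)) (v : V) :
    G.comp (insert e S) v =
      if x ∈ G.comp S v ∨ y ∈ G.comp S v then G.comp S x ∪ G.comp S y else G.comp S v := by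
  ext u
  split_ifs with h <;> simp only [mem_union, mem_comp, reachOn_insert_iff hxy] at h ⊢ <;>
    grind [ReachOn.trans, ReachOn.symm]

lemma comps_insert (hxy : G.inc e = s(x, y)) :
    G.comps (insert e S) = (G.comps S).image
      (fun K => if x ∈ K ∨ y ∈ K then G.comp S x ∪ G.comp S y else K) := by
  rw [comps, comps, image_image]
  exact image_congr fun v _ => comp_insert hxy v

lemma comps_insert_of_reachOn (hxy : G.inc e = s(x, y)) (h : G.ReachOn S x y) :
    G.comps (insert e S) = G.comps S := by
  rw [comps_insert hxy]
  conv_rhs => rw [← image_id (s := G.comps S)]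
  refine image_congr fun K hK => ?_
  have hxy' : G.comp S x = G.comp S y := comp_eq_comp_iff.2 h
  split_ifs with hK'
  · rcases hK' with hx | hy
    · rw [← hxy', union_self, ← eq_comp_of_mem_comps hK hx, id]
    · rw [hxy', union_self, ← eq_comp_of_mem_comps hK hy, id]
  · rfl

lemma card_comps_insert_of_not_reachOn (hxy : G.inc e = s(x, y)) (h : ¬ G.ReachOn S x y) :
    (G.comps (insert e S)).card + 1 = (G.comps S).card := by
  set f : Finset V → Finset V :=
    fun K => if x ∈ K ∨ y ∈ K then G.comp S x ∪ G.comp S y else K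
  have hne : G.comp S x ≠ G.comp S y := fun h' => h (comp_eq_comp_iff.1 h')
  have hy : G.comp S y ∈ G.comps S := comp_mem_comps
  have hx : G.comp S x ∈ (G.comps S).erase (G.comp S y) := mem_erase.2 ⟨hne, comp_mem_comps⟩
  have himage : (G.comps S).image f = ((G.comps S).erase (G.comp S y)).image f := by
    refine (image_subset_image (erase_subset _ _)).antisymm' fun L hL => ?_
    obtain ⟨K, hK, rfl⟩ := mem_image.1 hL
    by_cases hKy : K = G.comp S y
    · refine mem_image.2 ⟨_, hx, ?_⟩
      simp [f, hKy, self_mem_comp]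
    · exact mem_image_of_mem f (mem_erase.2 ⟨hKy, hK⟩)
  have hf : ∀ K ∈ (G.comps S).erase (G.comp S y), f K = if K = G.comp S x then
      G.comp S x ∪ G.comp S y else K := by
    intro K hK
    obtain ⟨hKy, hK⟩ := mem_erase.1 hK
    have hyK : y ∉ K := fun hyK => hKy (eq_comp_of_mem_comps hK hyK)
    have hxK : x ∈ K ↔ K = G.comp S x :=
      ⟨eq_comp_of_mem_comps hK, fun hK' => hK' ▸ self_mem_comp⟩
    simp only [f, hyK, or_false, hxK]
  have hinj : Set.InjOn f ((G.comps S).erase (G.comp S y)) := by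
    intro K hK K' hK' hKK'
    have hmem : ∀ K ∈ (G.comps S).erase (G.comp S y), K ≠ G.comp S x →
        G.comp S x ∪ G.comp S y ≠ K := fun K hK hKx hK' =>
      hKx (eq_comp_of_mem_comps (mem_of_mem_erase hK) (hK' ▸ mem_union_left _ self_mem_comp))
    rw [hf K hK, hf K' hK'] at hKK'
    split_ifs at hKK' with h1 h2 h2
    · exact h1.trans h2.symm
    · exact absurd hKK' (hmem K' hK' h2)
    · exact absurd hKK'.symm (hmem K hK h1)
    · exact hKK'
  rw [comps_insert hxy, himage, card_image_of_injOn hinj, card_erase_of_mem hy]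
  have := card_pos.2 ⟨_, hy⟩
  omega

lemma rank_insert_of_reachOn (hxy : G.inc e = s(x, y)) (h : G.ReachOn S x y) :
    G.rank (insert e S) = G.rank S := by
  rw [rank, rank, comps_insert_of_reachOn hxy h]

lemma rank_insert_of_not_reachOn (hxy : G.inc e = s(x, y)) (h : ¬ G.ReachOn S x y) :
    G.rank (insert e S) = G.rank S + 1 := by
  have := card_comps_insert_of_not_reachOn hxy h
  have : (G.comps S).card ≤ Fintype.card V := card_comps_le
  rw [rank, rank]
  omega

lemma rank_le_rank_insert : G.rank S ≤ G.rank (insert e S) := by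
  obtain ⟨x, y, -, hxy⟩ := G.exists_inc_eq e
  by_cases h : G.ReachOn S x y
  · rw [rank_insert_of_reachOn hxy h]
  · rw [rank_insert_of_not_reachOn hxy h]
    omega

lemma rank_insert_le : G.rank (insert e S) ≤ G.rank S + 1 := by
  obtain ⟨x, y, -, hxy⟩ := G.exists_inc_eq e
  by_cases h : G.ReachOn S x y
  · rw [rank_insert_of_reachOn hxy h]
    omega
  · rw [rank_insert_of_not_reachOn hxy h]

lemma rank_insert_add_rank_le (hST : S ⊆ T) :
    G.rank (insert e T) + G.rank S ≤ G.rank T + G.rank (insert e S) := by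
  obtain ⟨x, y, -, hxy⟩ := G.exists_inc_eq e
  by_cases h : G.ReachOn S x y
  · rw [rank_insert_of_reachOn hxy h, rank_insert_of_reachOn hxy (h.mono hST)]
  · rw [rank_insert_of_not_reachOn hxy h]
    have := rank_insert_le (G := G) (S := T) (e := e)
    omega

variable [Finite E]

lemma rank_le_ncard (S : Set E) : G.rank S ≤ S.ncard := by
  induction S, S.toFinite using Set.Finite.induction_on with
  | empty => simp [rank_empty]
  | @insert e S he hS ih =>
    rw [Set.ncard_insert_of_notMem he hS]
    exact rank_insert_le.trans (by omega)

lemma rank_mono (hST : S ⊆ T) : G.rank S ≤ G.rank T := by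
  suffices ∀ Z : Set E, G.rank S ≤ G.rank (S ∪ Z) by
    simpa [Set.union_sdiff_cancel hST] using this (T \ S)
  intro Z
  induction Z, Z.toFinite using Set.Finite.induction_on with
  | empty => simp
  | insert _ _ ih => exact ih.trans (Set.union_insert .. ▸ rank_le_rank_insert)

lemma rank_union_add_rank_inter_le (X Y : Set E) :
    G.rank (X ∪ Y) + G.rank (X ∩ Y) ≤ G.rank X + G.rank Y := by
  suffices ∀ Z : Set E, ∀ W ⊆ X,
      G.rank (X ∪ Z) + G.rank W ≤ G.rank X + G.rank (W ∪ Z) by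
    simpa [Set.union_eq_right.2 Set.inter_subset_right] using this Y (X ∩ Y) Set.inter_subset_left
  intro Z W hWX
  induction Z, Z.toFinite using Set.Finite.induction_on with
  | empty => simp
  | @insert e Z _ _ ih =>
    have := rank_insert_add_rank_le (G := G) (e := e) (Set.union_subset_union_left Z hWX)
    rw [Set.union_insert, Set.union_insert]
    omega

end Rank

section SpanningTree

variable [Fintype V] [Finite E] {F H : Set E}

lemma exists_isTree_of_rank_eq_ncard [Nonempty V] (hH : ∀ u v, G.ReachOn H u v) (hFH : F ⊆ H)
    (hF : G.rank F = F.ncard) : ∃ S, F ⊆ S ∧ S ⊆ H ∧ G.IsTree Set.univ S := by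
  obtain ⟨S, ⟨hFS, hSH, hS⟩, hmax⟩ :=
    (Set.toFinite {S | F ⊆ S ∧ S ⊆ H ∧ G.rank S = S.ncard}).exists_maximal
      ⟨F, subset_rfl, hFH, hF⟩
  have hconn : ∀ u v, G.ReachOn S u v := by
    by_contra! ⟨u, v, huv⟩
    obtain ⟨e, heH, a, b, hab, ha, hb⟩ :=
      (hH u v).exists_edge_crossing (U := {z | G.ReachOn S u z}) .rfl huv
    have hab' : ¬ G.ReachOn S a b := fun h => hb (ha.trans h)
    have heS : e ∉ S := fun heS => hab' (AdjOn.reachOn ⟨e, heS, hab⟩)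
    have hins : insert e S ⊆ S := hmax ⟨hFS.trans (Set.subset_insert e S),
      Set.insert_subset heH hSH, by
        rw [rank_insert_of_not_reachOn hab hab', Set.ncard_insert_of_notMem heS, hS]⟩
      (Set.subset_insert e S)
    exact heS (hins (Set.mem_insert e S))
  refine ⟨S, hFS, hSH, Set.univ_nonempty, fun _ _ _ _ => trivial, fun u _ v _ => hconn u v, ?_⟩
  rw [← hS, rank, card_comps_eq_one hconn, Set.ncard_univ, Nat.card_eq_fintype_card]
  have := Fintype.card_pos (α := V)
  omega

end SpanningTree

section Rado

open Finset Function

variable [Fintype V] {ι : Type*} {K : ι → Set E}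

def RadoCondition (G : Multigraph V E) (K : ι → Set E) : Prop :=
  ∀ I : Finset ι, I.card ≤ G.rank (⋃ i ∈ I, K i)

lemma RadoCondition.exists_of_not_update [DecidableEq ι] (h : G.RadoCondition K) {i₀ : ι}
    {A : Set E} (hA : ¬ G.RadoCondition (update K i₀ A)) :
    ∃ J : Finset ι, i₀ ∉ J ∧ G.rank (A ∪ ⋃ i ∈ J, K i) ≤ J.card := by
  obtain ⟨I, hI⟩ := not_forall.1 hA
  have hoff : ∀ J : Finset ι, i₀ ∉ J → ⋃ i ∈ J, update K i₀ A i = ⋃ i ∈ J, K i :=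
    fun J hJ => Set.iUnion₂_congr fun i hi => update_of_ne (ne_of_mem_of_not_mem hi hJ) _ _
  by_cases hi₀ : i₀ ∈ I
  · refine ⟨I.erase i₀, notMem_erase i₀ I, ?_⟩
    rw [← insert_erase hi₀, set_biUnion_insert_update _ (notMem_erase i₀ I),
      card_insert_of_notMem (notMem_erase i₀ I)] at hI
    omega
  · exact absurd (h I) (by rwa [hoff I hi₀] at hI)

lemma RadoCondition.update_sdiff_singleton [Finite E] [DecidableEq ι] (h : G.RadoCondition K)
    {i₀ : ι} {x y : E} (hx : x ∈ K i₀) (hxy : x ≠ y) :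
    G.RadoCondition (update K i₀ (K i₀ \ {x})) ∨
      G.RadoCondition (update K i₀ (K i₀ \ {y})) := by
  by_contra! ⟨hx', hy'⟩
  obtain ⟨Jx, hi₀x, hJx⟩ := h.exists_of_not_update hx'
  obtain ⟨Jy, hi₀y, hJy⟩ := h.exists_of_not_update hy'
  set Ax := K i₀ \ {x} ∪ ⋃ i ∈ Jx, K i
  set Ay := K i₀ \ {y} ∪ ⋃ i ∈ Jy, K i
  have hunion : K i₀ ∪ ⋃ i ∈ Jx ∪ Jy, K i ⊆ Ax ∪ Ay := by
    intro e
    rcases eq_or_ne e x with rfl | hex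
    · simp [Ax, Ay, hxy, hx]
    · simp only [Ax, Ay, set_biUnion_union, Set.mem_union, Set.mem_sdiff,
        Set.mem_singleton_iff, hex]
      tauto
  have hinter : ⋃ i ∈ Jx ∩ Jy, K i ⊆ Ax ∩ Ay := by
    intro e
    simp only [Ax, Ay, Set.mem_iUnion, Set.mem_inter_iff, Set.mem_union, mem_inter, exists_prop]
    rintro ⟨i, ⟨hix, hiy⟩, hi⟩
    exact ⟨.inr ⟨i, hix, hi⟩, .inr ⟨i, hiy, hi⟩⟩
  have hbig := h (insert i₀ (Jx ∪ Jy))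
  rw [card_insert_of_notMem (by simp [hi₀x, hi₀y]), set_biUnion_insert] at hbig
  have := (h (Jx ∩ Jy)).trans (rank_mono hinter)
  have := hbig.trans (rank_mono hunion)
  have := rank_union_add_rank_inter_le (G := G) Ax Ay
  have := card_union_add_card_inter Jx Jy
  omega

lemma RadoCondition.exists_injective_of_ncard_le_one [Finite E] [Fintype ι]
    (h : G.RadoCondition K) (hK : ∀ i, (K i).ncard ≤ 1) :
    ∃ φ : ι → E, (∀ i, φ i ∈ K i) ∧ Injective φ ∧
      G.rank (Set.range φ) = Fintype.card ι := by
  have hsingle : ∀ i, ∃ a, K i = {a} := by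
    intro i
    have := h {i}
    rw [set_biUnion_singleton, card_singleton] at this
    have hne : (K i).Nonempty := Set.nonempty_iff_ne_empty.2 fun hi => by
      rw [hi, rank_empty] at this
      omega
    exact Set.ncard_eq_one.1 ((hK i).antisymm ((Set.ncard_pos (Set.toFinite _)).2 hne))
  choose φ hφ using hsingle
  have hrange : ⋃ i ∈ (univ : Finset ι), K i = Set.range φ := by simp [hφ]
  have hle := h univ
  rw [hrange, card_univ] at hle
  have hcard : (Set.range φ).ncard ≤ Fintype.card ι := by
    rw [← Set.image_univ]
    exact (Set.ncard_image_le).trans (by simp)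
  have hrank := rank_le_ncard (G := G) (Set.range φ)
  refine ⟨φ, fun i => by simp [hφ], ?_, by omega⟩
  rw [← Set.injOn_univ]
  refine Set.injOn_of_ncard_image_eq ?_
  rw [Set.image_univ, Set.ncard_univ, Nat.card_eq_fintype_card]
  omega

/-- **Rado's theorem** for the cycle matroid of `G`. -/
theorem RadoCondition.exists_injective [Finite E] [Fintype ι] [DecidableEq ι]
    (h : G.RadoCondition K) :
    ∃ φ : ι → E, (∀ i, φ i ∈ K i) ∧ Injective φ ∧
      G.rank (Set.range φ) = Fintype.card ι := by
  induction hn : ∑ i, (K i).ncard using Nat.strong_induction_on generalizing K with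
  | _ n ih =>
  by_cases hbig : ∃ i₀, 1 < (K i₀).ncard
  · obtain ⟨i₀, hi₀⟩ := hbig
    obtain ⟨x, hx, y, hy, hxy⟩ := (Set.one_lt_ncard (Set.toFinite _)).1 hi₀
    have hshrink : ∀ z ∈ K i₀, G.RadoCondition (update K i₀ (K i₀ \ {z})) →
        ∃ φ : ι → E, (∀ i, φ i ∈ K i) ∧ Injective φ ∧
          G.rank (Set.range φ) = Fintype.card ι := by
      intro z hz hz'
      have hsub : ∀ i, update K i₀ (K i₀ \ {z}) i ⊆ K i := fun i => by
        rcases eq_or_ne i i₀ with rfl | hi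
        · simp
        · simp [hi]
      have hlt : ∑ i, (update K i₀ (K i₀ \ {z}) i).ncard < n := hn ▸ sum_lt_sum
        (fun i _ => Set.ncard_le_ncard (hsub i)) ⟨i₀, mem_univ _, by
          simpa using Set.ncard_sdiff_singleton_lt_of_mem hz⟩
      obtain ⟨φ, hφ, hφinj, hφrank⟩ := ih _ hlt hz' rfl
      exact ⟨φ, fun i => hsub i (hφ i), hφinj, hφrank⟩
    rcases h.update_sdiff_singleton hx hxy with h' | h'
    exacts [hshrink x hx h', hshrink y hy h']
  · simp only [not_exists, not_lt] at hbig
    exact h.exists_injective_of_ncard_le_one hbig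

end Rado

section IndependentSet

def edgesAt (G : Multigraph V E) (A : Set V) : Set E := {e | ∃ a ∈ A, a ∈ G.inc e}

def IsIndep (G : Multigraph V E) (A : Set V) : Prop :=
  ∀ e a b, G.inc e = s(a, b) → a ∈ A → b ∉ A

variable {A B : Set V} {e : E} {a a' b u : V}

lemma edgesAt_mono (h : A ⊆ B) : G.edgesAt A ⊆ G.edgesAt B :=
  fun _ ⟨a, ha, hae⟩ => ⟨a, h ha, hae⟩

lemma reachOn_edgesAt_of_mem_inc (ha : a ∈ A) (hae : a ∈ G.inc e) (hue : u ∈ G.inc e) :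
    G.ReachOn (G.edgesAt A) u a :=
  reachOn_of_mem_inc ⟨a, ha, hae⟩ hue hae

lemma IsIndep.exists_inc_eq (hA : G.IsIndep A) (ha : a ∈ A) (hae : a ∈ G.inc e) :
    ∃ b ∉ A, G.inc e = s(a, b) := by
  obtain ⟨x, y, -, hxy⟩ := G.exists_inc_eq e
  rw [hxy, Sym2.mem_iff] at hae
  rcases hae with rfl | rfl
  · exact ⟨y, hA e _ y hxy ha, hxy⟩
  · exact ⟨x, hA e _ x (hxy.trans Sym2.eq_swap) ha, hxy.trans Sym2.eq_swap⟩

lemma IsIndep.eq_of_mem_inc (hA : G.IsIndep A) (ha : a ∈ A) (ha' : a' ∈ A)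
    (hae : a ∈ G.inc e) (ha'e : a' ∈ G.inc e) : a' = a := by
  obtain ⟨b, hb, hab⟩ := hA.exists_inc_eq ha hae
  rw [hab, Sym2.mem_iff] at ha'e
  exact ha'e.resolve_right fun h => hb (h ▸ ha')

lemma IsIndep.properOn_edgesAt [DecidablePred (· ∈ A)] (hA : G.IsIndep A) :
    G.ProperOn (G.edgesAt A) (fun v => decide (v ∈ A)) := by
  rintro e ⟨a, ha, hae⟩ u v huv
  obtain ⟨b, hb, hab⟩ := hA.exists_inc_eq ha hae
  rcases Sym2.eq_iff.1 (huv.symm.trans hab) with ⟨rfl, rfl⟩ | ⟨rfl, rfl⟩ <;> simp [ha, hb]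

lemma IsIndep.insert (hA : G.IsIndep A) (hbA : b ∉ A)
    (hb : ∀ e ∈ G.edgesAt A, b ∉ G.inc e) :
    G.IsIndep (insert b A) := by
  rintro e u v huv (rfl | hu) (rfl | hv)
  · exact G.loopless e (huv ▸ Sym2.mk_isDiag_iff.2 rfl)
  · exact hb e ⟨v, hv, huv ▸ Sym2.mem_mk_right _ _⟩ (huv ▸ Sym2.mem_mk_left _ _)
  · exact hb e ⟨u, hu, huv ▸ Sym2.mem_mk_left _ _⟩ (huv ▸ Sym2.mem_mk_right _ _)
  · exact hA e u v huv hu hv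

/-- Grow `A` greedily, adding a vertex adjacent to the part of `G` already joined to `w` through
the edges at `A`; every vertex of `A` stays joined to `w`. -/
lemma exists_isIndep_reachOn_edgesAt [Finite V] (hconn : G.Connected) (w : V) (lam : Bool) :
    ∃ A, (w ∈ A ↔ lam = true) ∧ G.IsIndep A ∧ ∀ u v, G.ReachOn (G.edgesAt A) u v := by
  let P : Set V → Prop := fun A =>
    (w ∈ A ↔ lam = true) ∧ G.IsIndep A ∧ ∀ a ∈ A, G.ReachOn (G.edgesAt A) a w
  have hP₀ : P (if lam then {w} else ∅) := by
    cases lam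
    · simp [P, IsIndep]
    · refine ⟨by simp, ?_, by simp [ReachOn.rfl]⟩
      rintro e u v huv rfl rfl
      exact G.loopless e (huv ▸ Sym2.mk_isDiag_iff.2 rfl)
  obtain ⟨A, ⟨hwA, hA, hAw⟩, hmax⟩ := (Set.toFinite {A | P A}).exists_maximal ⟨_, hP₀⟩
  have hreach : ∀ u, G.ReachOn (G.edgesAt A) u w := by
    by_contra! ⟨z, hz⟩
    obtain ⟨e, -, a, b, hab, ha, hb⟩ := (hconn.2 z w).exists_edge_crossing
      (U := {u | ¬ G.ReachOn (G.edgesAt A) u w}) hz (not_not.2 .rfl)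
    simp only [Set.mem_ofPred_eq, not_not] at ha hb
    have haA : ∀ e ∈ G.edgesAt A, a ∉ G.inc e := by
      rintro e ⟨a', ha', ha'e⟩ hae
      exact ha ((reachOn_edgesAt_of_mem_inc ha' ha'e hae).trans (hAw a' ha'))
    have hAA : A ⊆ insert a A := Set.subset_insert a A
    have hPa : P (insert a A) := by
      refine ⟨?_, hA.insert (fun h => ha (hAw a h)) haA, ?_⟩
      · rw [Set.mem_insert_iff, or_iff_right (by rintro rfl; exact ha .rfl), hwA]
      · rintro a' (rfl | ha')
        · exact (reachOn_edgesAt_of_mem_inc (Set.mem_insert a' A) (hab ▸ Sym2.mem_mk_left _ _)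
            (hab ▸ Sym2.mem_mk_right _ _)).symm.trans (hb.mono (edgesAt_mono hAA))
        · exact (hAw a' ha').mono (edgesAt_mono hAA)
    exact haA e ⟨a, hmax hPa hAA (Set.mem_insert a A), hab ▸ Sym2.mem_mk_left _ _⟩
      (hab ▸ Sym2.mem_mk_left _ _)
  exact ⟨A, hwA, hA, fun u v => (hreach u).trans (hreach v).symm⟩

end IndependentSet

section Counting

open Finset
open scoped Classical

variable {A : Set V} {D : Finset V}

lemma degOn_mono [Finite E] {S T : Set E} (hST : S ⊆ T) (v : V) : G.degOn S v ≤ G.degOn T v :=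
  Set.ncard_le_ncard fun _ he => ⟨hST he.1, he.2⟩

lemma degree_eq_card [Fintype E] (v : V) : G.degree v = #{e | v ∈ G.inc e} := by
  rw [degree, degOn, ← Set.ncard_coe_finset]
  congr
  ext
  simp

lemma degree_le_maxDegree [Fintype V] (v : V) : G.degree v ≤ G.maxDegree := le_sup (mem_univ v)

lemma card_filter_exists_mem_inc (F : Finset E) (T : Finset V)
    (hT : ∀ e ∈ F, ∀ t ∈ T, ∀ t' ∈ T, t ∈ G.inc e → t' ∈ G.inc e → t = t') :
    #{e ∈ F | ∃ t ∈ T, t ∈ G.inc e} = ∑ t ∈ T, #{e ∈ F | t ∈ G.inc e} := by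
  rw [← card_biUnion]
  · congr
    ext
    simp only [mem_filter, mem_biUnion]
    tauto
  · intro t ht t' ht' htt'
    simp only [Function.onFun, disjoint_left, mem_filter]
    exact fun e he he' => htt' (hT e he.1 t ht t' ht' he.2 he'.2)

lemma IsIndep.card_filter_exists_mem_inc [Fintype E] {T : Finset V} (hA : G.IsIndep A)
    (hT : ↑T ⊆ A) : #{e | ∃ t ∈ T, t ∈ G.inc e} = ∑ t ∈ T, G.degree t := by
  rw [Multigraph.card_filter_exists_mem_inc _ _ fun e _ t ht t' ht' hte ht'e =>
    (hA.eq_of_mem_inc (hT ht') (hT ht) ht'e hte)]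
  exact sum_congr rfl fun t _ => (degree_eq_card t).symm

variable [Fintype V]

lemma IsIndep.exists_inc_eq_mem_comp_sdiff (hA : G.IsIndep A) (hD : ∀ d ∈ D, d ∈ A) {r d : V}
    {e : E} (hd : d ∈ G.comp (G.edgesAt D) r ∩ D) (hde : d ∈ G.inc e) :
    ∃ b ∈ G.comp (G.edgesAt D) r \ D, G.inc e = s(d, b) := by
  obtain ⟨hdK, hdD⟩ := mem_inter.1 hd
  obtain ⟨b, hbA, hdb⟩ := hA.exists_inc_eq (hD d hdD) hde
  refine ⟨b, mem_sdiff.2 ⟨?_, fun hbD => hbA (hD b hbD)⟩, hdb⟩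
  exact mem_comp_of_mem_inc hdK ⟨d, hdD, hde⟩ hde (hdb ▸ Sym2.mem_mk_right d b)

lemma isRegular_and_isBipartite_of_comp (hconn : G.Connected) (hA : G.IsIndep A)
    (hD : ∀ d ∈ D, d ∈ A ∧ G.degree d = G.maxDegree) (r : V)
    (hdeg : ∀ b ∈ G.comp (G.edgesAt D) r \ D, G.degree b = G.maxDegree)
    (hback : ∀ b ∈ G.comp (G.edgesAt D) r \ D, ∀ e, b ∈ G.inc e →
      ∃ d ∈ D, d ∈ G.inc e) :
    G.IsRegular ∧ G.IsBipartite := by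
  set K := G.comp (G.edgesAt D) r
  have hside : ∀ e u v, G.inc e = s(u, v) → u ∈ K → (u ∈ D ↔ v ∉ D) ∧ v ∈ K := by
    intro e u v huv hu
    have hue : u ∈ G.inc e := huv ▸ Sym2.mem_mk_left u v
    have hve : v ∈ G.inc e := huv ▸ Sym2.mem_mk_right u v
    by_cases huD : u ∈ D
    · exact ⟨iff_of_true huD fun hvD => hA e u v huv (hD u huD).1 (hD v hvD).1,
        mem_comp_of_mem_inc hu ⟨u, huD, hue⟩ hue hve⟩
    · obtain ⟨d, hdD, hde⟩ := hback u (mem_sdiff.2 ⟨hu, huD⟩) e hue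
      rw [huv, Sym2.mem_iff] at hde
      obtain rfl := hde.resolve_left (by rintro rfl; exact huD hdD)
      exact ⟨iff_of_false huD (not_not.2 hdD), mem_comp_of_mem_inc hu ⟨d, hdD, hve⟩ hue hve⟩
  have hK : ∀ v, v ∈ K := by
    by_contra! ⟨v, hv⟩
    obtain ⟨e, -, a, b, hab, ha, hb⟩ :=
      (hconn.2 r v).exists_edge_crossing (U := ↑K) (mem_coe.2 self_mem_comp) hv
    exact hb (hside e a b hab ha).2
  refine ⟨⟨G.maxDegree, fun v => ?_⟩, fun v => decide (v ∈ D), fun e _ u v huv => ?_⟩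
  · by_cases hv : v ∈ D
    exacts [(hD v hv).2, hdeg v (mem_sdiff.2 ⟨hK v, hv⟩)]
  · have := (hside e u v huv (hK u)).1
    by_cases hu : u ∈ D <;> simp_all

variable [Fintype E]

/-- Double counting the edges at `K ∩ D`: each has its other end in `K \ D`, and the vertices of
`D` have maximum degree; equality would make `G` regular and bipartite. -/
lemma card_inter_lt_card_sdiff_comp (hG : ¬ (G.IsRegular ∧ G.IsBipartite)) (hconn : G.Connected)
    (hA : G.IsIndep A) (hD : ∀ d ∈ D, d ∈ A ∧ G.degree d = G.maxDegree) (r : V) :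
    #(G.comp (G.edgesAt D) r ∩ D) < #(G.comp (G.edgesAt D) r \ D) := by
  set K := G.comp (G.edgesAt D) r
  set Es : Finset E := {e | ∃ d ∈ K ∩ D, d ∈ G.inc e}
  have hKDA : ↑(K ∩ D) ⊆ A := fun d hd => (hD d (mem_inter.1 hd).2).1
  have hEs : ∀ e ∈ Es, ∃ d ∈ K ∩ D, ∃ b ∈ K \ D, G.inc e = s(d, b) := by
    intro e he
    obtain ⟨d, hd, hde⟩ := (mem_filter.1 he).2
    exact ⟨d, hd, hA.exists_inc_eq_mem_comp_sdiff (fun d hd => (hD d hd).1) hd hde⟩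
  have hcardD : #Es = #(K ∩ D) * G.maxDegree := by
    rw [hA.card_filter_exists_mem_inc hKDA,
      sum_congr rfl fun d hd => (hD d (mem_inter.1 hd).2).2, sum_const, smul_eq_mul]
  have hcardB : #Es = ∑ b ∈ K \ D, #{e ∈ Es | b ∈ G.inc e} := by
    rw [← Multigraph.card_filter_exists_mem_inc]
    · refine congrArg card (filter_true_of_mem fun e he => ?_).symm
      obtain ⟨d, -, b, hb, hdb⟩ := hEs e he
      exact ⟨b, hb, hdb ▸ Sym2.mem_mk_right d b⟩
    · intro e he t ht t' ht' hte ht'e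
      obtain ⟨d, hd, b, -, hdb⟩ := hEs e he
      have hne : ∀ t ∈ K \ D, t ≠ d :=
        fun t ht h => (mem_sdiff.1 ht).2 (h ▸ (mem_inter.1 hd).2)
      rw [hdb, Sym2.mem_iff] at hte ht'e
      rw [hte.resolve_left (hne t ht), ht'e.resolve_left (hne t' ht')]
  have hsub : ∀ b, {e ∈ Es | b ∈ G.inc e} ⊆ ({e | b ∈ G.inc e} : Finset E) :=
    fun b => filter_subset_filter _ (subset_univ Es)
  have hfib : ∀ b ∈ K \ D, #{e ∈ Es | b ∈ G.inc e} ≤ G.maxDegree := fun b _ =>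
    (card_le_card (hsub b)).trans ((degree_eq_card b).symm.trans_le (degree_le_maxDegree b))
  by_contra! hle
  have hsum : ∑ b ∈ K \ D, #{e ∈ Es | b ∈ G.inc e} = ∑ b ∈ K \ D, G.maxDegree :=
    (sum_le_sum hfib).antisymm
      (by rw [sum_const, smul_eq_mul, ← hcardB, hcardD]; exact Nat.mul_le_mul_right _ hle)
  have hfull := (sum_eq_sum_iff_of_le hfib).1 hsum
  have hdeg : ∀ b ∈ K \ D, G.degree b = G.maxDegree := fun b hb =>
    (degree_le_maxDegree b).antisymm
      (by rw [← hfull b hb, degree_eq_card]; exact card_le_card (hsub b))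
  refine hG (isRegular_and_isBipartite_of_comp hconn hA hD r hdeg fun b hb e hbe => ?_)
  have hEsb : {e ∈ Es | b ∈ G.inc e} = ({e | b ∈ G.inc e} : Finset E) :=
    eq_of_subset_of_card_le (hsub b) (by rw [← degree_eq_card, hfull b hb, hdeg b hb])
  have he : e ∈ {e ∈ Es | b ∈ G.inc e} := hEsb ▸ mem_filter.2 ⟨mem_univ e, hbe⟩
  obtain ⟨d, hd, hde⟩ := (mem_filter.1 (mem_filter.1 he).1).2
  exact ⟨d, (mem_inter.1 hd).2, hde⟩

lemma two_mul_card_le_rank_edgesAt (hG : ¬ (G.IsRegular ∧ G.IsBipartite)) (hconn : G.Connected)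
    (hA : G.IsIndep A) (hD : ∀ d ∈ D, d ∈ A ∧ G.degree d = G.maxDegree) :
    2 * #D ≤ G.rank (G.edgesAt D) := by
  have hK : ∀ K ∈ G.comps (G.edgesAt D), 2 * #(D ∩ K) + 1 ≤ #(univ ∩ K) := by
    intro K hK
    obtain ⟨r, -, rfl⟩ := mem_image.1 hK
    have := card_inter_lt_card_sdiff_comp hG hconn hA hD r
    have := card_inter_add_card_sdiff (G.comp (G.edgesAt D) r) D
    rw [univ_inter, inter_comm]
    omega
  have := sum_le_sum hK
  rw [sum_add_distrib, ← mul_sum, sum_card_inter_comps, sum_card_inter_comps, sum_const,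
    card_univ, smul_eq_mul, mul_one] at this
  rw [rank]
  omega

/-- Rado's theorem applied to two copies of the star of each `d ∈ D`. -/
lemma exists_forest_two_le_degOn (hG : ¬ (G.IsRegular ∧ G.IsBipartite)) (hconn : G.Connected) (hA : G.IsIndep A)
    (hD : ∀ d ∈ D, d ∈ A ∧ G.degree d = G.maxDegree) :
    ∃ F ⊆ G.edgesAt D, G.rank F = F.ncard ∧ ∀ d ∈ D, 2 ≤ G.degOn F d := by
  let K : D × Bool → Set E := fun i => {e | (i.1 : V) ∈ G.inc e}
  have hrado : G.RadoCondition K := by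
    intro I
    set D' := I.image fun i => (i.1 : V)
    have hunion : ⋃ i ∈ I, K i = G.edgesAt D' := by
      ext e
      simp [K, D', edgesAt]
    have hD' : ∀ d ∈ D', d ∈ A ∧ G.degree d = G.maxDegree := by
      intro d hd
      obtain ⟨i, -, rfl⟩ := mem_image.1 hd
      exact hD _ i.1.2
    have hI : #I ≤ 2 * #D' := card_le_mul_card_image I 2 fun d _ => by
      refine (card_le_card_of_injOn Prod.snd (fun _ _ => mem_univ _) ?_).trans_eq
        (card_univ.trans Fintype.card_bool)
      intro i hi j hj hij
      exact Prod.ext (Subtype.ext ((mem_filter.1 hi).2.trans (mem_filter.1 hj).2.symm)) hij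
    rw [hunion]
    exact hI.trans (two_mul_card_le_rank_edgesAt hG hconn hA hD')
  obtain ⟨φ, hφK, hφinj, hφrank⟩ := hrado.exists_injective
  refine ⟨Set.range φ, ?_, ?_, fun d hd => ?_⟩
  · rintro _ ⟨i, rfl⟩
    exact ⟨i.1, i.1.2, hφK i⟩
  · rw [hφrank, Set.ncard_range_of_injective hφinj, Nat.card_eq_fintype_card]
  · have hne : φ (⟨d, hd⟩, false) ≠ φ (⟨d, hd⟩, true) := hφinj.ne (by simp)
    exact (Set.one_lt_ncard (Set.toFinite _)).2
      ⟨_, ⟨⟨_, rfl⟩, hφK (⟨d, hd⟩, false)⟩, _, ⟨⟨_, rfl⟩, hφK (⟨d, hd⟩, true)⟩,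
        hne⟩

end Counting

end Multigraph

/-- Every 2-edge-connected multigraph `G` that is not a regular
bipartite graph has, for every vertex `w` and every `lam ∈ {0,1}` (here `false`
encodes type 0 and `true` encodes type 1), a spanning weakly even
`(w, lam)`-tree: a spanning tree `T` (with edge set `S`) such that in the
bipartition `c` of `T` in which `w` has type `lam`, every leaf of `T` whose
degree in `G` equals `Δ(G)` has type 0. -/
theorem spanning_weakly_even_tree_of_twoEdgeConnected {V E : Type} [Fintype V] [Fintype E]
    (G : Multigraph V E) (h2ec : G.TwoEdgeConnected)
    (hG : ¬ (G.IsRegular ∧ G.IsBipartite)) (w : V) (lam : Bool) :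
    ∃ (S : Set E) (c : V → Bool),
      G.IsTree Set.univ S ∧
      G.ProperOn S c ∧
      c w = lam ∧
      ∀ v : V, G.IsLeaf S v → G.degree v = G.maxDegree → c v = false := by
  classical
  have hconn := h2ec.1
  have : Nonempty V := hconn.1
  obtain ⟨A, hwA, hA, hAconn⟩ := Multigraph.exists_isIndep_reachOn_edgesAt hconn w lam
  set D : Finset V := {v | v ∈ A ∧ G.degree v = G.maxDegree}
  have hD : ∀ d ∈ D, d ∈ A ∧ G.degree d = G.maxDegree :=
    fun d hd => (Finset.mem_filter.1 hd).2
  obtain ⟨F, hFD, hF, hFdeg⟩ := Multigraph.exists_forest_two_le_degOn hG hconn hA hD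
  obtain ⟨S, hFS, hSA, hS⟩ := Multigraph.exists_isTree_of_rank_eq_ncard hAconn
    (hFD.trans (Multigraph.edgesAt_mono fun d hd => (hD d hd).1)) hF
  refine ⟨S, fun v => decide (v ∈ A), hS, fun e he => hA.properOn_edgesAt e (hSA he), ?_, ?_⟩
  · cases lam <;> simpa using hwA
  · intro v hleaf hdeg
    by_contra hv
    have := (hFdeg v (Finset.mem_filter.2 ⟨Finset.mem_univ v, by simpa using hv, hdeg⟩)).trans
      (Multigraph.degOn_mono hFS v)
    rw [Multigraph.IsLeaf] at hleaf
    omega
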